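/- arXiv:2504.05493 — 2 statements merged into one kernel-verified Lean document; each statement's English description precedes it below -/
import Mathlib

section
/- Let E be a real normed vector space, let Φ : E → E be Lipschitz with constant L_Φ ≥ 0, let N : E → E be Lipschitz with constant L_N ≥ 0, let h > 0, p ∈ ℕ, ε > 0, and set α = L_Φ + h^(p+1)·L_N and β = ε·h^(p+1). Let (x_k)_{k≥0} be a sequence in E (the exact solution samples) satisfying ‖x_{k+1} − Φ(x_k) − h^(p+1)·N(x_k)‖ ≤ β for all k ≥ 0, and define the enhanced-integrator sequence (y_k) by y_0 = x_0 and y_{k+1} = Φ(y_k) + h^(p+1)·N(y_k). Let e_k = y_k − x_k. Then for every k ≥ 0: if α > 1 then ‖e_{k+1}‖ ≤ β·(exp((k+1)·(α−1)) − 1)/(α−1); if α = 1 then ‖e_{k+1}‖ ≤ (k+1)·β; and if 0 < α < 1 then ‖e_{k+1}‖ ≤ β/(1−α). -/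
/-!
The error `e k = y k - x k` obeys the perturbed Lipschitz estimate
`‖e (k + 1)‖ ≤ α ‖e k‖ + β`, because the enhanced one-step map `Φ + h ^ (p + 1) • N` is
`α`-Lipschitz and the exact samples miss it by at most `β` per step. Unrolling from
`e 0 = 0` gives `‖e k‖ ≤ β (1 + α + ⋯ + α ^ (k - 1))`, and the three regimes are bounds on
this geometric sum: `α ^ n ≤ exp (n (α - 1))`, the value `n` at `α = 1`, and the series
`(1 - α)⁻¹`.
-/

open Finset

theorem le_mul_geom_sum_of_le_mul_add {u : ℕ → ℝ} {a b : ℝ} (ha : 0 ≤ a) (h0 : u 0 ≤ 0)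
    (hu : ∀ k, u (k + 1) ≤ a * u k + b) (k : ℕ) : u k ≤ b * ∑ i ∈ range k, a ^ i := by
  induction k with
  | zero => simpa using h0
  | succ k ih =>
    calc u (k + 1) ≤ a * u k + b := hu k
      _ ≤ a * (b * ∑ i ∈ range k, a ^ i) + b := by gcongr
      _ = b * ∑ i ∈ range (k + 1), a ^ i := by rw [geom_sum_succ]; ring

theorem norm_sub_le_mul_geom_sum_of_iterate {E : Type*} [SeminormedAddCommGroup E]
    {F : E → E} {a b : ℝ} (ha : 0 ≤ a) (hF : ∀ u v, ‖F u - F v‖ ≤ a * ‖u - v‖)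
    {x y : ℕ → E} (h0 : y 0 = x 0) (hx : ∀ k, ‖x (k + 1) - F (x k)‖ ≤ b)
    (hy : ∀ k, y (k + 1) = F (y k)) (k : ℕ) :
    ‖y k - x k‖ ≤ b * ∑ i ∈ range k, a ^ i := by
  refine le_mul_geom_sum_of_le_mul_add (u := fun k ↦ ‖y k - x k‖) ha (by simp [h0])
    (fun k ↦ ?_) k
  calc ‖y (k + 1) - x (k + 1)‖ = ‖(F (y k) - F (x k)) - (x (k + 1) - F (x k))‖ := by
        rw [hy, sub_sub_sub_cancel_right]
    _ ≤ ‖F (y k) - F (x k)‖ + ‖x (k + 1) - F (x k)‖ := norm_sub_le _ _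
    _ ≤ a * ‖y k - x k‖ + b := add_le_add (hF _ _) (hx k)

theorem norm_add_smul_sub_add_smul_le {E : Type*} [SeminormedAddCommGroup E] [NormedSpace ℝ E]
    {Φ N : E → E} {LΦ LN c : ℝ} (hc : 0 ≤ c) (hΦ : ∀ a b, ‖Φ a - Φ b‖ ≤ LΦ * ‖a - b‖)
    (hN : ∀ a b, ‖N a - N b‖ ≤ LN * ‖a - b‖) (a b : E) :
    ‖(Φ a + c • N a) - (Φ b + c • N b)‖ ≤ (LΦ + c * LN) * ‖a - b‖ :=
  calc ‖(Φ a + c • N a) - (Φ b + c • N b)‖ = ‖(Φ a - Φ b) + c • (N a - N b)‖ := by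
        rw [add_sub_add_comm, smul_sub]
    _ ≤ ‖Φ a - Φ b‖ + c * ‖N a - N b‖ :=
        (norm_add_le _ _).trans_eq (by rw [norm_smul, Real.norm_of_nonneg hc])
    _ ≤ LΦ * ‖a - b‖ + c * (LN * ‖a - b‖) := by gcongr <;> apply_assumption
    _ = (LΦ + c * LN) * ‖a - b‖ := by ring

theorem geom_sum_le_exp_sub_one_div {a : ℝ} (ha : 1 < a) (n : ℕ) :
    ∑ i ∈ range n, a ^ i ≤ (Real.exp (n * (a - 1)) - 1) / (a - 1) := by
  have hpow : a ^ n ≤ Real.exp (n * (a - 1)) := by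
    rw [Real.exp_nat_mul]
    gcongr
    linarith [Real.add_one_le_exp (a - 1)]
  rw [geom_sum_eq ha.ne']
  gcongr

theorem enhanced_integrator_global_error_bound_general
    {E : Type*} [NormedAddCommGroup E] [NormedSpace ℝ E]
    (Φ N : E → E) (LΦ LN : ℝ) (hLΦ : 0 ≤ LΦ) (hLN : 0 ≤ LN)
    (hΦ : ∀ a b : E, ‖Φ a - Φ b‖ ≤ LΦ * ‖a - b‖)
    (hN : ∀ a b : E, ‖N a - N b‖ ≤ LN * ‖a - b‖)
    (h : ℝ) (hh : 0 < h) (p : ℕ)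
    (α β : ℝ) (hα : α = LΦ + h ^ (p + 1) * LN)
    (x : ℕ → E)
    (hx : ∀ k : ℕ, ‖x (k + 1) - Φ (x k) - h ^ (p + 1) • N (x k)‖ ≤ β)
    (y : ℕ → E) (hy0 : y 0 = x 0)
    (hy : ∀ k : ℕ, y (k + 1) = Φ (y k) + h ^ (p + 1) • N (y k))
    (e : ℕ → E) (he : ∀ k : ℕ, e k = y k - x k) :
    ∀ k : ℕ,
      (1 < α → ‖e (k + 1)‖ ≤ β * (Real.exp ((k + 1 : ℝ) * (α - 1)) - 1) / (α - 1)) ∧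
      (α = 1 → ‖e (k + 1)‖ ≤ (k + 1 : ℝ) * β) ∧
      (0 < α → α < 1 → ‖e (k + 1)‖ ≤ β / (1 - α)) := by
  have hc : 0 ≤ h ^ (p + 1) := by positivity
  have hα0 : 0 ≤ α := hα ▸ by positivity
  have hβ0 : 0 ≤ β := (norm_nonneg _).trans (hx 0)
  have bound (n : ℕ) : ‖e n‖ ≤ β * ∑ i ∈ range n, α ^ i := by
    rw [he]
    refine norm_sub_le_mul_geom_sum_of_iterate (F := fun u ↦ Φ u + h ^ (p + 1) • N u) hα0
      (hα ▸ norm_add_smul_sub_add_smul_le hc hΦ hN) hy0 (fun k ↦ ?_) hy n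
    simpa only [sub_sub] using hx k
  intro k
  refine ⟨fun h1 ↦ ?_, fun h1 ↦ ?_, fun _ h1 ↦ ?_⟩
  · calc ‖e (k + 1)‖ ≤ β * ∑ i ∈ range (k + 1), α ^ i := bound _
      _ ≤ β * ((Real.exp ((k + 1 : ℝ) * (α - 1)) - 1) / (α - 1)) := by
          gcongr; exact_mod_cast geom_sum_le_exp_sub_one_div h1 (k + 1)
      _ = _ := (mul_div_assoc _ _ _).symm
  · simpa [h1, mul_comm] using bound (k + 1)
  · calc ‖e (k + 1)‖ ≤ β * ∑ i ∈ range (k + 1), α ^ i := bound _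
      _ ≤ β * (α ^ 0 / (1 - α)) := by
          gcongr; simpa only [range_eq_Ico] using geom_sum_Ico_le_of_lt_one hα0 h1
      _ = β / (1 - α) := by rw [pow_zero, mul_one_div]

/-- Global error bound for a neural-network-enhanced one-step integrator:
the three regimes α > 1, α = 1 and 0 < α < 1. -/
theorem enhanced_integrator_global_error_bound
    {E : Type*} [NormedAddCommGroup E] [NormedSpace ℝ E]
    (Φ N : E → E) (LΦ LN : ℝ) (hLΦ : 0 ≤ LΦ) (hLN : 0 ≤ LN)
    (hΦ : ∀ a b : E, ‖Φ a - Φ b‖ ≤ LΦ * ‖a - b‖)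
    (hN : ∀ a b : E, ‖N a - N b‖ ≤ LN * ‖a - b‖)
    (h : ℝ) (hh : 0 < h) (p : ℕ) (ε : ℝ) (hε : 0 < ε)
    (α β : ℝ) (hα : α = LΦ + h ^ (p + 1) * LN) (hβ : β = ε * h ^ (p + 1))
    (x : ℕ → E)
    (hx : ∀ k : ℕ, ‖x (k + 1) - Φ (x k) - h ^ (p + 1) • N (x k)‖ ≤ β)
    (y : ℕ → E) (hy0 : y 0 = x 0)
    (hy : ∀ k : ℕ, y (k + 1) = Φ (y k) + h ^ (p + 1) • N (y k))
    (e : ℕ → E) (he : ∀ k : ℕ, e k = y k - x k) :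
    ∀ k : ℕ,
      (1 < α → ‖e (k + 1)‖ ≤ β * (Real.exp ((k + 1 : ℝ) * (α - 1)) - 1) / (α - 1)) ∧
      (α = 1 → ‖e (k + 1)‖ ≤ (k + 1 : ℝ) * β) ∧
      (0 < α → α < 1 → ‖e (k + 1)‖ ≤ β / (1 - α)) :=
  enhanced_integrator_global_error_bound_general Φ N LΦ LN hLΦ hLN hΦ hN h hh p α β hα x hx y hy0 hy
    e he
end

section
/- Let E be a real Banach space, let f : E → E be twice continuously differentiable (ContDiff ℝ 2), let x : ℝ → E satisfy the autonomous ordinary differential equation x'(t) = f(x(t)) for all t (i.e., HasDerivAt x (f (x t)) t for every t ∈ ℝ), and let t₀ ∈ ℝ. Then the local error of one step of Heun's method (the explicit trapezoidal rule) is of order three in the step size: the function h ↦ x(t₀ + h) − x(t₀) − (h/2) • ( f(x(t₀)) + f( x(t₀) + h • f(x(t₀)) ) ) is O(h³) as h → 0 (big-O with respect to the filter of neighborhoods of 0 in ℝ). -/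
/-!
Along the solution, `x'' = Df(x) f(x)`, so with `v = f (x t₀)` the exact flow is
`x t₀ + h v + (h²/2) Df(x t₀) v + O(h³)`. The second stage satisfies
`f (x t₀ + h v) = v + h Df(x t₀) v + O(h²)`, and inserting this into Heun's update reproduces the
same quadratic Taylor polynomial. Each Taylor remainder is controlled by integrating a bound on its
derivative with the mean value inequality, gaining one power of `h` at a time.
-/

open Asymptotics Filter Topology

section Taylor

variable {E : Type*} [NormedAddCommGroup E] [NormedSpace ℝ E]

theorem isBigO_pow_succ_of_hasDerivAt {g g' : ℝ → E} {k : ℕ} (hg0 : g 0 = 0)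
    (hg : ∀ᶠ t in 𝓝 0, HasDerivAt g (g' t) t) (hg' : g' =O[𝓝 0] (· ^ k)) :
    g =O[𝓝 0] (· ^ (k + 1)) := by
  obtain ⟨C, hC0, hC⟩ := hg'.exists_nonneg
  obtain ⟨ε, hε0, hε⟩ := Metric.eventually_nhds_iff_ball.1 (hg.and hC.bound)
  refine IsBigO.of_bound C (Metric.eventually_nhds_iff_ball.2 ⟨ε, hε0, fun h hh => ?_⟩)
  have hball : Metric.closedBall (0 : ℝ) ‖h‖ ⊆ Metric.ball 0 ε :=
    Metric.closedBall_subset_ball (mem_ball_zero_iff.1 hh)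
  have hderiv : ∀ t ∈ Metric.closedBall (0 : ℝ) ‖h‖,
      HasDerivWithinAt g (g' t) (Metric.closedBall 0 ‖h‖) t :=
    fun t ht => (hε t (hball ht)).1.hasDerivWithinAt
  have hbound : ∀ t ∈ Metric.closedBall (0 : ℝ) ‖h‖, ‖g' t‖ ≤ C * ‖h‖ ^ k := by
    intro t ht
    calc ‖g' t‖ ≤ C * ‖t ^ k‖ := (hε t (hball ht)).2
      _ = C * ‖t‖ ^ k := by rw [norm_pow]
      _ ≤ C * ‖h‖ ^ k := by gcongr; exact mem_closedBall_zero_iff.1 ht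
  have := (convex_closedBall (0 : ℝ) ‖h‖).norm_image_sub_le_of_norm_hasDerivWithin_le
    hderiv hbound (Metric.mem_closedBall_self (norm_nonneg h))
    (mem_closedBall_zero_iff.2 le_rfl)
  simpa [hg0, norm_pow, pow_succ, mul_assoc] using this

theorem isBigO_taylor_remainder_sq {φ φ' : ℝ → E} {a : ℝ}
    (hφ : ∀ᶠ t in 𝓝 a, HasDerivAt φ (φ' t) t) (hφ' : DifferentiableAt ℝ φ' a) :
    (fun h : ℝ => φ (a + h) - φ a - h • φ' a) =O[𝓝 0] (· ^ 2) := by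
  have hshift : Tendsto (a + ·) (𝓝 0) (𝓝 a) := by
    simpa using (continuous_const_add a).tendsto 0
  refine isBigO_pow_succ_of_hasDerivAt (g' := fun h => φ' (a + h) - φ' a) (by simp) ?_ ?_
  · filter_upwards [hshift.eventually hφ] with h hh
    exact (((hh.comp_const_add a h).sub_const (φ a)).sub
      ((hasDerivAt_id h).smul_const (φ' a))).congr_deriv (by simp)
  · simpa [Function.comp_def] using hφ'.isBigO_sub.comp_tendsto hshift

theorem isBigO_taylor_remainder_cube {φ φ' φ'' : ℝ → E} {a : ℝ}
    (hφ : ∀ᶠ t in 𝓝 a, HasDerivAt φ (φ' t) t) (hφ' : ∀ᶠ t in 𝓝 a, HasDerivAt φ' (φ'' t) t)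
    (hφ'' : DifferentiableAt ℝ φ'' a) :
    (fun h : ℝ => φ (a + h) - φ a - h • φ' a - (h ^ 2 / 2) • φ'' a) =O[𝓝 0] (· ^ 3) := by
  have hshift : Tendsto (a + ·) (𝓝 0) (𝓝 a) := by
    simpa using (continuous_const_add a).tendsto 0
  refine isBigO_pow_succ_of_hasDerivAt (by simp) ?_ (isBigO_taylor_remainder_sq hφ' hφ'')
  filter_upwards [hshift.eventually hφ] with h hh
  have hsq : HasDerivAt (fun s : ℝ => (s ^ 2 / 2) • φ'' a) (h • φ'' a) h := by
    convert ((hasDerivAt_pow 2 h).div_const 2).smul_const (φ'' a) using 2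
    ring
  exact ((((hh.comp_const_add a h).sub_const (φ a)).sub
      ((hasDerivAt_id h).smul_const (φ' a))).sub hsq).congr_deriv (by simp)

end Taylor

theorem heun_local_error_isBigO_cube_general
    {E : Type*} [NormedAddCommGroup E] [NormedSpace ℝ E]
    (f : E → E) (hf : ContDiff ℝ 2 f)
    (x : ℝ → E) (hx : ∀ t : ℝ, HasDerivAt x (f (x t)) t) (t₀ : ℝ) :
    (fun h : ℝ =>
        x (t₀ + h) - x t₀ - (h / 2) • (f (x t₀) + f (x t₀ + h • f (x t₀))))
      =O[nhds (0 : ℝ)] fun h : ℝ => h ^ 3 := by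
  have hf' : Differentiable ℝ f := hf.differentiable (by norm_num)
  have hdf : Differentiable ℝ (fderiv ℝ f) :=
    (hf.fderiv_right (m := 1) le_rfl).differentiable one_ne_zero
  have hsol := isBigO_taylor_remainder_cube (a := t₀) (.of_forall hx)
    (.of_forall fun t => (hf' (x t)).hasFDerivAt.comp_hasDerivAt t (hx t))
    ((hdf.clm_apply hf') (x t₀) |>.comp t₀ (hx t₀).differentiableAt)
  have hline (s : ℝ) : HasDerivAt (fun r : ℝ => x t₀ + r • f (x t₀)) (f (x t₀)) s := by
    simpa using ((hasDerivAt_id s).smul_const (f (x t₀))).const_add (x t₀)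
  have hstage := isBigO_taylor_remainder_sq (a := 0) (φ := fun s => f (x t₀ + s • f (x t₀)))
    (.of_forall fun s => (hf' _).hasFDerivAt.comp_hasDerivAt s (hline s))
    ((hdf.clm_apply (differentiable_const _)) _ |>.comp 0 (hline 0).differentiableAt)
  simp only [zero_add, zero_smul, add_zero] at hstage
  have hstage' : _ =O[𝓝 (0 : ℝ)] (· ^ 3) :=
    ((isBigO_refl (fun h : ℝ => h) (𝓝 0)).smul hstage).const_smul_left (2⁻¹ : ℝ)
      |>.congr_right fun h => by rw [smul_eq_mul]; ring
  refine (hsol.sub hstage').congr_left fun h => ?_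
  simp only [Pi.smul_apply]
  module

/-- The local error of one step of Heun's method (explicit trapezoidal rule)
applied to the autonomous ODE `x' = f(x)` with `f` twice continuously
differentiable is of order three in the step size. -/
theorem heun_local_error_isBigO_cube
    {E : Type*} [NormedAddCommGroup E] [NormedSpace ℝ E] [CompleteSpace E]
    (f : E → E) (hf : ContDiff ℝ 2 f)
    (x : ℝ → E) (hx : ∀ t : ℝ, HasDerivAt x (f (x t)) t) (t₀ : ℝ) :
    (fun h : ℝ =>
        x (t₀ + h) - x t₀ - (h / 2) • (f (x t₀) + f (x t₀ + h • f (x t₀))))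
      =O[nhds (0 : ℝ)] fun h : ℝ => h ^ 3 :=
  heun_local_error_isBigO_cube_general f hf x hx t₀
end
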